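/- Let r,k ∈ ℕ with k ≥ 1 and let φ be a first-order formula in the language of graphs with free variables indexed by Fin k that is semantically r-local and 2r-centered. Let G be a simple graph on a vertex type V and let ā ∈ V^k. Then: (i) if G ⊨ φ(ā), then dist_G(a_0,a_i) ≤ 2(k−1)r for every i ∈ Fin k, where a_0 is the first coordinate of ā; and (ii) if every coordinate of ā belongs to B := N_{(2k−1)r}(a_0), then G ⊨ φ(ā) if and only if the induced subgraph G[B] satisfies φ at the corresponding tuple. -/

import Mathlib

open FirstOrder

universe u

/-- `distLE G r a b` : there is a walk in `G` from `a` to `b` of length at most `r`. -/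
def distLE {V : Type*} (G : SimpleGraph V) (r : ℕ) (a b : V) : Prop :=
  ∃ w : G.Walk a b, w.length ≤ r

/-- The `r`-ball around a vertex `a`. -/
def ball {V : Type*} (G : SimpleGraph V) (r : ℕ) (a : V) : Set V :=
  {b | distLE G r a b}

/-- The `r`-neighborhood of a tuple: `⋃ i, N_r(a i)`. -/
def tball {V : Type*} (G : SimpleGraph V) (r : ℕ) {k : ℕ} (a : Fin k → V) : Set V :=
  ⋃ i, ball G r (a i)

theorem mem_tball {V : Type*} (G : SimpleGraph V) (r : ℕ) {k : ℕ} (a : Fin k → V)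
    (i : Fin k) : a i ∈ tball G r a :=
  Set.mem_iUnion.2 ⟨i, SimpleGraph.Walk.nil, by simp⟩

/-- A formula with `k` free variables is semantically `r`-local if its truth value at a
tuple only depends on the graph induced on the `r`-neighborhood of the tuple. -/
def SemLocal (r k : ℕ) (φ : Language.graph.Formula (Fin k)) : Prop :=
  ∀ (V : Type u) (G : SimpleGraph V) (a : Fin k → V),
    (letI := G.structure
     φ.Realize a) ↔
      (letI := (G.induce (tball G r a)).structure
       φ.Realize (fun i => (⟨a i, mem_tball G r a i⟩ : tball G r a)))

/-- The `r`-distance type (closeness graph) of a tuple `a : Fin k → V`: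
an edge between `i ≠ j` iff `dist_G (a i) (a j) ≤ r`. -/
def closeGraph {V : Type*} (G : SimpleGraph V) (r : ℕ) {k : ℕ} (a : Fin k → V) :
    SimpleGraph (Fin k) where
  Adj i j := i ≠ j ∧ distLE G r (a i) (a j)
  symm := by
    constructor
    rintro i j ⟨hij, w, hw⟩
    exact ⟨hij.symm, w.reverse, by simpa using hw⟩
  loopless := by constructor; rintro i ⟨hii, -⟩; exact hii rfl

/-- A formula of arity `k` is `2r`-centered if whenever it holds at a tuple, the
`2r`-distance type of the tuple is connected. -/
def Centered (r k : ℕ) (φ : Language.graph.Formula (Fin k)) : Prop :=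
  ∀ (V : Type u) (G : SimpleGraph V) (a : Fin k → V),
    (letI := G.structure
     φ.Realize a) → (closeGraph G (2 * r) a).Connected

/-! Centeredness joins any two coordinates of `ā` by a path with fewer than `k` edges in the
`2r`-closeness graph, so every `aᵢ` lies within `2(k-1)r` of `a₀` and `N_r(ā) ⊆ B`. Since `B`
contains `N_r(ā)`, the `r`-neighbourhood of `ā` in `G[B]` induces the same graph as `N_r(ā)` in
`G`, and locality, applied once in `G` and once in `G[B]`, gives (ii). When `φ` holds in `G[B]`,
the distance bound needed for `N_r(ā) ⊆ B` comes from centeredness applied in `G[B]`. -/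

open SimpleGraph

section distLE

variable {V W : Type*} {G : SimpleGraph V} {r m n : ℕ} {a b c : V}

theorem distLE.mono (h : distLE G m a b) (hmn : m ≤ n) : distLE G n a b :=
  let ⟨w, hw⟩ := h
  ⟨w, hw.trans hmn⟩

theorem distLE.trans (hab : distLE G m a b) (hbc : distLE G n b c) : distLE G (m + n) a c :=
  let ⟨w₁, h₁⟩ := hab
  let ⟨w₂, h₂⟩ := hbc
  ⟨w₁.append w₂, by rw [Walk.length_append]; omega⟩

theorem distLE.map {H : SimpleGraph W} (f : G →g H) (h : distLE G r a b) :
    distLE H r (f a) (f b) :=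
  let ⟨w, hw⟩ := h
  ⟨w.map f, (w.length_map f).trans_le hw⟩

theorem distLE_induce_iff {s : Set V} {u v : s} (hs : ball G r u ⊆ s) :
    distLE (G.induce s) r u v ↔ distLE G r u v := by
  classical
  refine ⟨distLE.map (Embedding.induce s).toHom, fun ⟨w, hw⟩ => ?_⟩
  -- every vertex of a walk of length `≤ r` from `u` lies in the `r`-ball around `u`
  have hsupp : ∀ x ∈ w.support, x ∈ s := fun x hx =>
    hs ⟨w.takeUntil x hx, (w.length_takeUntil_le_length hx).trans hw⟩
  refine ⟨w.induce s hsupp, ?_⟩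
  have hlen := congrArg Walk.length (w.map_induce hsupp)
  rw [Walk.length_map] at hlen
  exact hlen.trans_le hw

theorem mem_tball_induce_iff {s : Set V} {k : ℕ} {a : Fin k → s}
    (hs : tball G r (fun i => (a i : V)) ⊆ s) {v : s} :
    v ∈ tball (G.induce s) r a ↔ (v : V) ∈ tball G r (fun i => (a i : V)) := by
  simp only [tball, Set.mem_iUnion]
  refine exists_congr fun i => distLE_induce_iff ?_
  exact (Set.subset_iUnion (fun j => ball G r (a j : V)) i).trans hs

theorem tball_subset_ball {k : ℕ} {a : Fin k → V} (h : ∀ i, distLE G m c (a i)) :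
    tball G r a ⊆ ball G (m + r) c := by
  simp only [tball, Set.iUnion_subset_iff]
  exact fun i _ hv => (h i).trans hv

end distLE

theorem distLE_of_walk_closeGraph {V : Type*} {G : SimpleGraph V} {s k : ℕ} {a : Fin k → V}
    {i j : Fin k} (p : (closeGraph G s a).Walk i j) : distLE G (p.length * s) (a i) (a j) := by
  induction p with
  | nil => exact ⟨Walk.nil, by simp⟩
  | cons h _ ih => exact (h.2.trans ih).mono (le_of_eq (by rw [Walk.length_cons]; ring))

theorem SimpleGraph.Connected.distLE_of_closeGraph {V : Type*} {G : SimpleGraph V}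
    {s k : ℕ} {a : Fin k → V} (hc : (closeGraph G s a).Connected) (i j : Fin k) :
    distLE G ((k - 1) * s) (a i) (a j) := by
  obtain ⟨p⟩ := hc i j
  have hlen : p.toPath.1.length < k := by simpa using p.toPath.2.length_lt
  exact (distLE_of_walk_closeGraph p.toPath.1).mono (Nat.mul_le_mul_right s (by omega))

theorem Centered.distLE {r k : ℕ} {φ : Language.graph.Formula (Fin k)}
    (hcent : Centered.{u} r k φ) {V : Type u} (G : SimpleGraph V) (a : Fin k → V)
    (h : letI := G.structure; φ.Realize a) (i j : Fin k) :
    distLE G (2 * (k - 1) * r) (a i) (a j) :=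
  ((hcent V G a h).distLE_of_closeGraph i j).mono (le_of_eq (by ring))

def SimpleGraph.Iso.toLanguageEquiv {V W : Type*} {G : SimpleGraph V} {H : SimpleGraph W}
    (e : G ≃g H) :
    @Language.Equiv Language.graph V W G.structure H.structure :=
  letI := G.structure; letI := H.structure
  { toEquiv := e.toEquiv
    map_fun' := fun f => isEmptyElim f
    map_rel' := fun R _ => by
      cases R
      exact e.map_adj_iff }

theorem SimpleGraph.Iso.realize_formula_iff {V W : Type*} {G : SimpleGraph V}
    {H : SimpleGraph W} (e : G ≃g H) {α : Type*} (φ : Language.graph.Formula α) (v : α → V) :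
    (letI := G.structure; φ.Realize v) ↔ (letI := H.structure; φ.Realize (e ∘ v)) :=
  letI := G.structure; letI := H.structure
  (Language.StrongHomClass.realize_formula e.toLanguageEquiv φ).symm

def SimpleGraph.induceInduceIso {V : Type*} (G : SimpleGraph V) {s : Set V} {t : Set s}
    {u : Set V} (h : ∀ v, v ∈ u ↔ ∃ hv : v ∈ s, ⟨v, hv⟩ ∈ t) :
    (G.induce s).induce t ≃g G.induce u where
  toFun x := ⟨x.1.1, (h _).2 ⟨x.1.2, x.2⟩⟩
  invFun y := ⟨⟨y.1, ((h _).1 y.2).1⟩, ((h _).1 y.2).2⟩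
  left_inv _ := rfl
  right_inv _ := rfl
  map_rel_iff' := Iff.rfl

theorem SemLocal.realize_induce_iff {r k : ℕ} {φ : Language.graph.Formula (Fin k)}
    (hloc : SemLocal.{u} r k φ) {V : Type u} (G : SimpleGraph V) (s : Set V) (a : Fin k → s)
    (hs : tball G r (fun i => (a i : V)) ⊆ s) :
    (letI := G.structure; φ.Realize (fun i => (a i : V))) ↔
      (letI := (G.induce s).structure; φ.Realize a) := by
  let e := G.induceInduceIso (t := tball (G.induce s) r a) fun v =>
    ⟨fun hv => ⟨hs hv, (mem_tball_induce_iff hs).2 hv⟩,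
     fun ⟨_, hv⟩ => (mem_tball_induce_iff hs).1 hv⟩
  exact (hloc V G _).trans ((e.realize_formula_iff φ _).symm.trans (hloc s _ a).symm)

theorem stmt_14 {V : Type u} (r k : ℕ) (hk : 0 < k)
    (φ : Language.graph.Formula (Fin k))
    (hloc : SemLocal.{u} r k φ) (hcent : Centered.{u} r k φ)
    (G : SimpleGraph V) (a : Fin k → V) :
    ((letI := G.structure
      φ.Realize a) →
        ∀ i : Fin k, distLE G (2 * (k - 1) * r) (a ⟨0, hk⟩) (a i)) ∧
    (∀ ha : ∀ i : Fin k, a i ∈ ball G ((2 * k - 1) * r) (a ⟨0, hk⟩),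
      ((letI := G.structure
        φ.Realize a) ↔
        (letI := (G.induce (ball G ((2 * k - 1) * r) (a ⟨0, hk⟩))).structure
         φ.Realize
           (fun i => (⟨a i, ha i⟩ : ball G ((2 * k - 1) * r) (a ⟨0, hk⟩)))))) := by
  refine ⟨fun h => hcent.distLE G a h _, fun ha => ?_⟩
  have hradius : 2 * (k - 1) * r + r = (2 * k - 1) * r := by
    rw [show 2 * k - 1 = 2 * (k - 1) + 1 by omega]
    ring
  have hsub (hd : ∀ i, distLE G (2 * (k - 1) * r) (a ⟨0, hk⟩) (a i)) :
      tball G r a ⊆ ball G ((2 * k - 1) * r) (a ⟨0, hk⟩) :=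
    hradius ▸ tball_subset_ball hd
  constructor
  · intro h
    exact (hloc.realize_induce_iff G _ _ (hsub (hcent.distLE G a h _))).1 h
  · intro h
    have hd i := (hcent.distLE (G.induce _) _ h ⟨0, hk⟩ i).map (Embedding.induce _).toHom
    exact (hloc.realize_induce_iff G _ _ (hsub hd)).2 h
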